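/- arXiv:1808.04333 — 4 statements merged into one kernel-verified Lean document; each statement's English description precedes it below -/
import Mathlib

section
/- Let w be a weight on ℝⁿ for which there exist positive constants C and ε such that w(E)/w(Q) ≤ C (|E|/|Q|)^ε for every cube Q ⊆ ℝⁿ and every measurable E ⊆ Q (i.e., w ∈ A_∞). Then there exist positive constants C₀ and ξ such that for every λ > 0 and every cube Q, |{x ∈ Q : w(x) > λ}| ≤ C₀ |Q| [ (1/(λ|Q|)) ∫_Q w(x) dx ]^{1+ξ}. In fact one may take ξ = 1/(1−ε) − 1 and C₀ = C^{1/(1−ε)}. -/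
open MeasureTheory Filter ENNReal

noncomputable section

/-- The half-open axis-parallel cube with lower corner `c` and side length `h`. -/
def cube {n : ℕ} (c : Fin n → ℝ) (h : ℝ) : Set (Fin n → ℝ) :=
  Set.univ.pi fun i => Set.Ico (c i) (c i + h)

/-- The average of `g` over the set `Q`. -/
def avg {n : ℕ} (Q : Set (Fin n → ℝ)) (g : (Fin n → ℝ) → ℝ) : ℝ :=
  (volume Q).toReal⁻¹ * ∫ y in Q, g y

/-- `w` is an `A₁` Muckenhoupt weight: a locally integrable, a.e. positive function whose
average over every axis-parallel cube is controlled by its essential infimum there. -/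
def IsA1 {n : ℕ} (w : (Fin n → ℝ) → ℝ) : Prop :=
  LocallyIntegrable w volume ∧ (∀ᵐ x ∂(volume : Measure (Fin n → ℝ)), 0 < w x) ∧
    ∃ C > 0, ∀ (c : Fin n → ℝ) (h : ℝ), 0 < h →
      avg (cube c h) w ≤ C * essInf w (volume.restrict (cube c h))

/-- The `A₁` constant `[w]_{A₁}` of a weight. -/
def A1const {n : ℕ} (w : (Fin n → ℝ) → ℝ) : ℝ :=
  sInf {C : ℝ | 0 < C ∧ ∀ (c : Fin n → ℝ) (h : ℝ), 0 < h →
    avg (cube c h) w ≤ C * essInf w (volume.restrict (cube c h))}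

/-- The function `Φ(t) = t^r (1 + log⁺ t)^δ`. -/
def phi (r δ t : ℝ) : ℝ := t ^ r * (1 + max 0 (Real.log t)) ^ δ

/-- `b_k = 1 / Φ(a^{-k})`. -/
def bk (r δ a : ℝ) (k : ℤ) : ℝ := 1 / phi r δ (a ^ (-k))

/-- `Φ` is a Young function: convex, increasing, vanishing at `0`, tending to `∞`. -/
def IsYoung (Φ : ℝ → ℝ) : Prop :=
  ConvexOn ℝ (Set.Ici 0) Φ ∧ MonotoneOn Φ (Set.Ici 0) ∧ Φ 0 = 0 ∧
    Tendsto Φ atTop atTop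

/-- The Luxemburg average `‖f‖_{Φ,Q}` (with value `∞` if no admissible `λ` exists). -/
def eLuxNorm {n : ℕ} (Φ : ℝ → ℝ) (f : (Fin n → ℝ) → ℝ) (Q : Set (Fin n → ℝ)) : ℝ≥0∞ :=
  sInf (ENNReal.ofReal '' {l : ℝ | 0 < l ∧
    ∫⁻ y in Q, ENNReal.ofReal (Φ (|f y| / l)) ≤ volume Q})

/-- The Orlicz maximal operator `M_Φ`, a supremum over all cubes containing `x`. -/
def maxOrlicz {n : ℕ} (Φ : ℝ → ℝ) (f : (Fin n → ℝ) → ℝ) (x : Fin n → ℝ) : ℝ≥0∞ :=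
  sSup {r : ℝ≥0∞ | ∃ (c : Fin n → ℝ) (h : ℝ), 0 < h ∧ x ∈ cube c h ∧
    r = eLuxNorm Φ f (cube c h)}

/-- The Hardy–Littlewood maximal operator over axis-parallel cubes. -/
def maxHL {n : ℕ} (f : (Fin n → ℝ) → ℝ) (x : Fin n → ℝ) : ℝ≥0∞ :=
  sSup {r : ℝ≥0∞ | ∃ (c : Fin n → ℝ) (h : ℝ), 0 < h ∧ x ∈ cube c h ∧
    r = ENNReal.ofReal (avg (cube c h) fun y => |f y|)}

/-- `M_r f = M(|f|^r)^{1/r}`. -/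
def maxR {n : ℕ} (r : ℝ) (f : (Fin n → ℝ) → ℝ) (x : Fin n → ℝ) : ℝ≥0∞ :=
  maxHL (fun y => |f y| ^ r) x ^ (1 / r)

/-- A dyadic grid: its cubes are recorded as pairs (lower corner `c`, scale `k`), the
corresponding cube being `cube c (2^k)`.  Any two cubes of the grid are nested or
disjoint, and for each scale `k` the cubes of that scale partition `ℝⁿ`. -/
structure DyadicGrid (n : ℕ) where
  cubes : Set ((Fin n → ℝ) × ℤ)
  nested : ∀ p ∈ cubes, ∀ q ∈ cubes,
    (cube p.1 ((2:ℝ) ^ p.2) ∩ cube q.1 ((2:ℝ) ^ q.2)).Nonempty →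
      cube p.1 ((2:ℝ) ^ p.2) ⊆ cube q.1 ((2:ℝ) ^ q.2) ∨
        cube q.1 ((2:ℝ) ^ q.2) ⊆ cube p.1 ((2:ℝ) ^ p.2)
  partition : ∀ (k : ℤ) (x : Fin n → ℝ), ∃! c : Fin n → ℝ,
    (c, k) ∈ cubes ∧ x ∈ cube c ((2:ℝ) ^ k)

/-- The dyadic Orlicz maximal operator `M_{Φ,D}`. -/
def maxOrliczD {n : ℕ} (D : DyadicGrid n) (Φ : ℝ → ℝ) (f : (Fin n → ℝ) → ℝ)
    (x : Fin n → ℝ) : ℝ≥0∞ :=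
  sSup {r : ℝ≥0∞ | ∃ p ∈ D.cubes, x ∈ cube p.1 ((2:ℝ) ^ p.2) ∧
    r = eLuxNorm Φ f (cube p.1 ((2:ℝ) ^ p.2))}

/-- The dyadic Hardy–Littlewood maximal operator `M_D`. -/
def maxD {n : ℕ} (D : DyadicGrid n) (v : (Fin n → ℝ) → ℝ) (x : Fin n → ℝ) : ℝ≥0∞ :=
  sSup {r : ℝ≥0∞ | ∃ p ∈ D.cubes, x ∈ cube p.1 ((2:ℝ) ^ p.2) ∧
    r = ENNReal.ofReal (avg (cube p.1 ((2:ℝ) ^ p.2)) v)}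

/-- `w ∈ A_q`, `1 < q < ∞`. -/
def IsAq {n : ℕ} (w : (Fin n → ℝ) → ℝ) (q : ℝ) : Prop :=
  LocallyIntegrable w volume ∧ (∀ᵐ x ∂(volume : Measure (Fin n → ℝ)), 0 < w x) ∧
    ∃ C > 0, ∀ (c : Fin n → ℝ) (h : ℝ), 0 < h →
      avg (cube c h) w * avg (cube c h) (fun x => w x ^ (1 - q / (q - 1))) ^ (q - 1) ≤ C

/-! Chebyshev on the level set `E = {x ∈ Q | λ < w x}` gives
`λ |E| ≤ w(E) ≤ C (|E|/|Q|)^ε w(Q)`; dividing by `(|E|/|Q|)^ε` and raising to the power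
`1/(1-ε)` bounds `|E|/|Q|` by `(C w(Q)/(λ|Q|))^{1/(1-ε)}`. -/

lemma rpow_le_of_le_mul_rpow {t K e : ℝ} (ht : 0 < t) (he : e < 1) (h : t ≤ K * t ^ e) :
    t ≤ K ^ (1 - e)⁻¹ := by
  have hle : t ^ (1 - e) ≤ K := by
    rwa [Real.rpow_sub ht, Real.rpow_one, div_le_iff₀ (Real.rpow_pos_of_pos ht e)]
  calc t = (t ^ (1 - e)) ^ (1 - e)⁻¹ := by
        rw [← Real.rpow_mul ht.le, mul_inv_cancel₀ (sub_pos.2 he).ne', Real.rpow_one]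
    _ ≤ K ^ (1 - e)⁻¹ := by gcongr

section LevelSet

variable {α : Type*} [MeasurableSpace α] {μ : Measure α} {f : α → ℝ} {Q : Set α}

lemma exists_measurableSet_subset_measureReal_eq_levelSet (hQ : MeasurableSet Q)
    (hf : AEMeasurable f (μ.restrict Q)) (lam : ℝ) :
    ∃ E ⊆ {x ∈ Q | lam < f x}, MeasurableSet E ∧ μ.real E = μ.real {x ∈ Q | lam < f x} := by
  have hnull : NullMeasurableSet {x ∈ Q | lam < f x} μ := by
    rw [← Set.inter_ofPred_eq_sep, Set.inter_comm,
      ← nullMeasurableSet_restrict hQ.nullMeasurableSet]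
    exact nullMeasurableSet_lt aemeasurable_const hf
  obtain ⟨E, hES, hE, hEae⟩ := hnull.exists_measurable_subset_ae_eq
  exact ⟨E, hES, hE, measureReal_congr hEae⟩

theorem measureReal_levelSet_le_of_setIntegral_le (hQ : MeasurableSet Q) (hQfin : μ Q ≠ ∞)
    (hf : IntegrableOn f Q μ) (hf0 : 0 ≤ᵐ[μ.restrict Q] f) {C e : ℝ} (hC : 0 ≤ C) (he : e < 1)
    (hdecay : ∀ E ⊆ Q, MeasurableSet E →
      ∫ x in E, f x ∂μ ≤ C * (μ.real E / μ.real Q) ^ e * ∫ x in Q, f x ∂μ)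
    {lam : ℝ} (hlam : 0 < lam) :
    μ.real {x ∈ Q | lam < f x} ≤
      C ^ (1 - e)⁻¹ * μ.real Q * ((lam * μ.real Q)⁻¹ * ∫ x in Q, f x ∂μ) ^ (1 - e)⁻¹ := by
  set I := ∫ x in Q, f x ∂μ
  have hI : 0 ≤ I := integral_nonneg_of_ae hf0
  obtain ⟨E, hES, hE, hEeq⟩ :=
    exists_measurableSet_subset_measureReal_eq_levelSet hQ hf.1.aemeasurable lam
  have hEQ : E ⊆ Q := hES.trans (Set.sep_subset _ _)
  rw [← hEeq]
  rcases measureReal_nonneg.eq_or_lt with hE0 | hEpos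
  · rw [← hE0]
    positivity
  have hQpos : 0 < μ.real Q := hEpos.trans_le (measureReal_mono hEQ hQfin)
  have hlower : lam * μ.real E ≤ ∫ x in E, f x ∂μ :=
    setIntegral_ge_of_const_le_real hE (measure_ne_top_of_subset hEQ hQfin)
      (fun x hx => (hES hx).2.le) (hf.mono_set hEQ)
  set t := μ.real E / μ.real Q
  have ht : 0 < t := div_pos hEpos hQpos
  have hEt : μ.real E = t * μ.real Q := (div_mul_cancel₀ _ hQpos.ne').symm
  have hkey : t ≤ C * ((lam * μ.real Q)⁻¹ * I) * t ^ e := by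
    have hupper : lam * (t * μ.real Q) ≤ C * t ^ e * I := hEt ▸ hlower.trans (hdecay E hEQ hE)
    calc t = (lam * μ.real Q)⁻¹ * (lam * (t * μ.real Q)) := by field_simp
      _ ≤ (lam * μ.real Q)⁻¹ * (C * t ^ e * I) := by gcongr
      _ = C * ((lam * μ.real Q)⁻¹ * I) * t ^ e := by ring
  calc μ.real E = t * μ.real Q := hEt
    _ ≤ (C * ((lam * μ.real Q)⁻¹ * I)) ^ (1 - e)⁻¹ * μ.real Q :=
        mul_le_mul_of_nonneg_right (rpow_le_of_le_mul_rpow ht he hkey) hQpos.le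
    _ = _ := by rw [Real.mul_rpow hC (by positivity)]; ring

end LevelSet

lemma measurableSet_cube {n : ℕ} (c : Fin n → ℝ) (h : ℝ) : MeasurableSet (cube c h) :=
  MeasurableSet.univ_pi fun _ => measurableSet_Ico

lemma cube_subset_Icc {n : ℕ} (c : Fin n → ℝ) (h : ℝ) :
    cube c h ⊆ Set.Icc c (c + fun _ => h) :=
  fun _ hx => ⟨fun i => (hx i trivial).1, fun i => (hx i trivial).2.le⟩

/-- Lemma 1 of the paper. Good-λ type estimate for `A_∞` weights. -/
theorem Ainfty_level_set_estimate {n : ℕ} (w : (Fin n → ℝ) → ℝ)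
    (hw : LocallyIntegrable w volume)
    (hwpos : ∀ᵐ x ∂(volume : Measure (Fin n → ℝ)), 0 < w x)
    (C ε : ℝ) (hC : 0 < C) (hε : 0 < ε)
    (hAinf : ∀ (c : Fin n → ℝ) (h : ℝ), 0 < h → ∀ E ⊆ cube c h, MeasurableSet E →
      ∫ x in E, w x ≤
        C * ((volume E).toReal / (volume (cube c h)).toReal) ^ ε * ∫ x in cube c h, w x) :
    ∃ C₀ : ℝ, 0 < C₀ ∧ ∃ ξ : ℝ, 0 < ξ ∧ ∀ lam : ℝ, 0 < lam →
      ∀ (c : Fin n → ℝ) (h : ℝ), 0 < h →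
      (volume {x ∈ cube c h | lam < w x}).toReal ≤
        C₀ * (volume (cube c h)).toReal *
          ((lam * (volume (cube c h)).toReal)⁻¹ * ∫ x in cube c h, w x) ^ (1 + ξ) := by
  -- The exponent must be `< 1`; lowering it only weakens the hypothesis since `|E| / |Q| ≤ 1`.
  set e := min ε (1 / 2)
  have he0 : 0 < e := lt_min hε one_half_pos
  have he1 : e < 1 := (min_le_right _ _).trans_lt one_half_lt_one
  refine ⟨C ^ (1 - e)⁻¹, by positivity, (1 - e)⁻¹ - 1,
    sub_pos.2 (one_lt_inv₀ (sub_pos.2 he1) |>.2 (by linarith)), fun lam hlam c h hh => ?_⟩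
  rw [add_sub_cancel]
  have hQfin : volume (cube c h) ≠ ∞ :=
    measure_ne_top_of_subset (cube_subset_Icc c h) isCompact_Icc.measure_lt_top.ne
  have hw0 : 0 ≤ᵐ[volume.restrict (cube c h)] w := ae_restrict_of_ae (hwpos.mono fun _ => le_of_lt)
  refine measureReal_levelSet_le_of_setIntegral_le (measurableSet_cube c h) hQfin
    ((hw.integrableOn_isCompact isCompact_Icc).mono_set (cube_subset_Icc c h)) hw0 hC.le he1
    (fun E hEQ hE => (hAinf c h hh E hEQ hE).trans ?_) hlam
  have hI : 0 ≤ ∫ x in cube c h, w x := integral_nonneg_of_ae hw0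
  gcongr C * ?_ * _
  exact Real.rpow_le_rpow_of_exponent_ge' (by positivity)
    (div_le_one_of_le₀ (measureReal_mono hEQ hQfin) measureReal_nonneg) he0.le (min_le_left _ _)

end
end

section
/- There exist dyadic grids D^(1), …, D^(3ⁿ) in ℝⁿ such that for every cube Q ⊆ ℝⁿ with sides parallel to the coordinate axes there exist an index i ∈ {1, …, 3ⁿ} and a cube Q₀ ∈ D^(i) with Q ⊆ Q₀ and ℓ(Q₀) ≤ 3 ℓ(Q), where ℓ denotes side length. -/
open MeasureTheory Filter ENNReal

noncomputable section

/-! The one-third trick. In one dimension, shift the dyadic lattice `2ᵏℤ` by `(-1)ᵏ 2ᵏ t / 3`.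
Because `-2/3 ≡ 1/3 (mod 1)`, the shifted lattice at scale `2ᵏ⁺¹` lies inside the one at
scale `2ᵏ`, so the shifted intervals still form a dyadic grid. The three shifts `t = 0, 1, 2`
together exhaust `(2ᵏ/3)ℤ`; hence if `2ᵏ ≤ 3h < 2ᵏ⁺¹`, every interval of length `h` starts in
`[a, a + 2ᵏ/3)` for a corner `a` of one of the three lattices, and so lies in `[a, a + 2ᵏ)`.
Taking products over the coordinates gives `3ⁿ` grids. -/

open Set

lemma Ico_subset_Ico_of_sub_eq_mul {s a b : ℝ} {j N : ℤ} (hs : 0 < s) (hab : a - b = j * s)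
    (hne : (Ico a (a + s) ∩ Ico b (b + N * s)).Nonempty) : Ico a (a + s) ⊆ Ico b (b + N * s) := by
  obtain ⟨x, ⟨hax, hxa⟩, ⟨hbx, hxb⟩⟩ := hne
  have hj : (-1 : ℤ) < j := by
    exact_mod_cast lt_of_mul_lt_mul_right (show (-1 : ℝ) * s < j * s by linarith) hs.le
  have hjN : j < N := by
    exact_mod_cast lt_of_mul_lt_mul_right (show (j : ℝ) * s < N * s by linarith) hs.le
  have hj' : (0 : ℝ) ≤ j := by exact_mod_cast (by omega : 0 ≤ j)
  have hjN' : (j : ℝ) + 1 ≤ N := by exact_mod_cast (by omega : j + 1 ≤ N)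
  apply Ico_subset_Ico <;> nlinarith

lemma existsUnique_pi {ι : Type*} {α : ι → Type*} {p : ∀ i, α i → Prop}
    (h : ∀ i, ∃! a, p i a) : ∃! f : ∀ i, α i, ∀ i, p i (f i) := by
  choose f hf huniq using h
  exact ⟨f, hf, fun g hg => funext fun i => huniq i (g i) (hg i)⟩

def shiftedDyadicLattice (t k : ℤ) : Set ℝ :=
  {a | ∃ m : ℤ, a = 2 ^ k * (m + (k.negOnePow : ℤ) * t / 3)}

namespace shiftedDyadicLattice

variable {t k : ℤ}

lemma succ_subset : shiftedDyadicLattice t (k + 1) ⊆ shiftedDyadicLattice t k := by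
  rintro _ ⟨m, rfl⟩
  refine ⟨2 * m - k.negOnePow * t, ?_⟩
  rw [Int.negOnePow_succ, zpow_add_one₀ two_ne_zero]
  push_cast
  ring

lemma antitone : Antitone (shiftedDyadicLattice t) :=
  antitone_int_of_succ_le fun _ => succ_subset

lemma exists_sub_eq_mul {a b : ℝ} (ha : a ∈ shiftedDyadicLattice t k)
    (hb : b ∈ shiftedDyadicLattice t k) : ∃ j : ℤ, a - b = j * 2 ^ k := by
  obtain ⟨m, rfl⟩ := ha
  obtain ⟨m', rfl⟩ := hb
  exact ⟨m - m', by push_cast; ring⟩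

lemma Ico_subset_Ico_of_le {l : ℤ} {a b : ℝ} (hkl : k ≤ l)
    (ha : a ∈ shiftedDyadicLattice t k) (hb : b ∈ shiftedDyadicLattice t l)
    (hne : (Ico a (a + 2 ^ k) ∩ Ico b (b + 2 ^ l)).Nonempty) :
    Ico a (a + 2 ^ k) ⊆ Ico b (b + 2 ^ l) := by
  obtain ⟨j, hj⟩ :=
    exists_sub_eq_mul ha (antitone hkl hb)
  have hl : (2 : ℝ) ^ l = ((2 ^ (l - k).toNat : ℤ) : ℝ) * 2 ^ k := by
    rw [Int.cast_pow, Int.cast_ofNat, ← zpow_natCast, ← zpow_add₀ two_ne_zero]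
    congr 1
    omega
  rw [hl] at hne ⊢
  exact Ico_subset_Ico_of_sub_eq_mul (zpow_pos two_pos k) hj hne

lemma existsUnique_mem_Ico (t k : ℤ) (x : ℝ) :
    ∃! a, a ∈ shiftedDyadicLattice t k ∧ x ∈ Ico a (a + 2 ^ k) := by
  set θ : ℝ := 2 ^ k * ((k.negOnePow : ℤ) * t / 3)
  have hcorner (m : ℤ) : (2 : ℝ) ^ k * (m + (k.negOnePow : ℤ) * t / 3) = m • 2 ^ k + θ := by
    rw [zsmul_eq_mul]; ring
  have hmem (m : ℤ) : x ∈ Ico (m • 2 ^ k + θ) (m • 2 ^ k + θ + 2 ^ k) ↔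
      x - m • (2 : ℝ) ^ k ∈ Ico θ (θ + 2 ^ k) := by
    simp only [mem_Ico]
    constructor <;> rintro ⟨h₁, h₂⟩ <;> constructor <;> linarith
  obtain ⟨m, hm, huniq⟩ := existsUnique_sub_zsmul_mem_Ico (zpow_pos two_pos k) x θ
  refine ⟨_, ⟨⟨m, rfl⟩, by rwa [hcorner, hmem]⟩, ?_⟩
  rintro _ ⟨⟨m', rfl⟩, hx⟩
  rw [hcorner, hmem] at hx
  rw [huniq m' hx]

lemma exists_mul_third_mem (k j : ℤ) :
    ∃ t : Fin 3, (j : ℝ) * (2 ^ k / 3) ∈ shiftedDyadicLattice t k := by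
  have he : (k.negOnePow : ℤ) * k.negOnePow = 1 := by
    rw [← Units.val_mul, Int.units_mul_self, Units.val_one]
  -- `t := e j mod 3` works for the sign `e = (-1)ᵏ` because `e² = 1`
  obtain ⟨m, t, hj⟩ : ∃ (m : ℤ) (t : Fin 3), j = 3 * m + k.negOnePow * ((t : ℕ) : ℤ) := by
    set e : ℤ := (k.negOnePow : ℤ)
    refine ⟨e * (e * j / 3), ⟨(e * j % 3).toNat, by omega⟩, ?_⟩
    rw [Fin.val_mk, Int.toNat_of_nonneg (Int.emod_nonneg _ three_ne_zero)]
    linear_combination -(e * Int.mul_ediv_add_emod (e * j) 3) - j * he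
  refine ⟨t, m, ?_⟩
  rw [hj]
  push_cast
  ring

lemma exists_le_lt_add_third (k : ℤ) (x : ℝ) :
    ∃ t : Fin 3, ∃ a ∈ shiftedDyadicLattice t k, a ≤ x ∧ x < a + 2 ^ k / 3 := by
  have hs : (0 : ℝ) < 2 ^ k / 3 := by positivity
  obtain ⟨t, ht⟩ := exists_mul_third_mem k ⌊x / (2 ^ k / 3)⌋
  refine ⟨t, _, ht, ?_, ?_⟩
  · exact (le_div_iff₀ hs).1 (Int.floor_le _)
  · have := (div_lt_iff₀ hs).1 (Int.lt_floor_add_one (x / (2 ^ k / 3)))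
    linarith

end shiftedDyadicLattice

def shiftedDyadicGrid (n : ℕ) (t : Fin n → ℤ) : DyadicGrid n where
  cubes := {p | ∀ i, p.1 i ∈ shiftedDyadicLattice (t i) p.2}
  nested := by
    rintro ⟨c, k⟩ hp ⟨c', l⟩ hq hne
    simp only [cube, ← pi_inter_distrib, univ_pi_nonempty_iff] at hne ⊢
    rcases le_total k l with hkl | hlk
    · exact .inl <| pi_mono fun i _ =>
        shiftedDyadicLattice.Ico_subset_Ico_of_le hkl (hp i) (hq i) (hne i)
    · exact .inr <| pi_mono fun i _ =>
        shiftedDyadicLattice.Ico_subset_Ico_of_le hlk (hq i) (hp i) (inter_comm _ _ ▸ hne i)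
  partition k x := by
    simpa only [cube, mem_ofPred_eq, mem_univ_pi, forall_and] using
      existsUnique_pi fun i => shiftedDyadicLattice.existsUnique_mem_Ico (t i) k (x i)

/-- Theorem 2 of the paper; Okikiolu. There are `3^n` dyadic grids such
that every axis-parallel cube `Q` is contained in a cube `Q₀` of one of the grids with
`ℓ(Q₀) ≤ 3 ℓ(Q)`. -/
theorem exists_dyadic_grids (n : ℕ) :
    ∃ D : Fin (3 ^ n) → DyadicGrid n,
      ∀ (c : Fin n → ℝ) (h : ℝ), 0 < h →
        ∃ (i : Fin (3 ^ n)) (c₀ : Fin n → ℝ) (k : ℤ),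
          (c₀, k) ∈ (D i).cubes ∧ cube c h ⊆ cube c₀ ((2:ℝ) ^ k) ∧
            (2:ℝ) ^ k ≤ 3 * h := by
  refine ⟨fun i => shiftedDyadicGrid n fun j => (finFunctionFinEquiv.symm i j : ℤ), ?_⟩
  intro c h hh
  obtain ⟨k, hk, hk'⟩ := exists_mem_Ico_zpow (by positivity : (0 : ℝ) < 3 * h) one_lt_two
  rw [zpow_add_one₀ two_ne_zero] at hk'
  choose v a ha hac using fun i => shiftedDyadicLattice.exists_le_lt_add_third k (c i)
  refine ⟨finFunctionFinEquiv v, a, k, fun i => by simpa using ha i,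
    pi_mono fun i _ => Ico_subset_Ico (hac i).1 ?_, hk⟩
  linarith [(hac i).2]
end
end

section
/- Let r ≥ 1, δ ≥ 0, Φ(t) = t^r (1 + log⁺ t)^δ, and a > 1. For k ∈ ℤ define b_k = 1/Φ(a^{-k}). Then a^r ≤ b_{k+1}/b_k ≤ Φ(a) for every k ∈ ℤ. -/
open MeasureTheory Filter ENNReal

noncomputable section

/-- Lemma 4 of the paper. `a^r ≤ b_{k+1}/b_k ≤ Φ(a)` where
`b_k = 1/Φ(a^{-k})`. -/
theorem bk_ratio_bounds (r δ : ℝ) (hr : 1 ≤ r) (hδ : 0 ≤ δ) (a : ℝ) (ha : 1 < a)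
    (k : ℤ) :
    a ^ r ≤ bk r δ a (k + 1) / bk r δ a k ∧
      bk r δ a (k + 1) / bk r δ a k ≤ phi r δ a := by
  have ha0 : (0:ℝ) < a := lt_trans one_pos ha
  have hla : 0 < Real.log a := Real.log_pos ha
  set t : ℝ := a ^ (-k) with htdef
  have ht : 0 < t := zpow_pos ha0 _
  have hta : 0 < t / a := div_pos ht ha0
  have hexp : a ^ (-(k+1)) = t / a := by
    rw [htdef, div_eq_mul_inv, ← zpow_neg_one, ← zpow_add₀ (ne_of_gt ha0)]
    ring_nf
  -- notation for log⁺ pieces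
  set Mt : ℝ := max 0 (Real.log t) with hMt
  set Ma : ℝ := max 0 (Real.log (t / a)) with hMa
  have hMt0 : 0 ≤ Mt := le_max_left _ _
  have hMa0 : 0 ≤ Ma := le_max_left _ _
  have h1Mt : (0:ℝ) < 1 + Mt := by linarith
  have h1Ma : (0:ℝ) < 1 + Ma := by linarith
  have hMle : Ma ≤ Mt := by
    have : Real.log (t / a) ≤ Real.log t :=
      Real.log_le_log (by positivity) (by
        rw [div_le_iff₀ ha0]; nlinarith)
    exact max_le_max le_rfl this
  -- key inequality: 1 + Mt ≤ (1 + Ma) * (1 + log a)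
  have hkey : 1 + Mt ≤ (1 + Ma) * (1 + Real.log a) := by
    rcases le_or_gt t 1 with h1 | h1
    · have : Mt = 0 := max_eq_left (Real.log_nonpos ht.le h1)
      nlinarith
    · have hlt : Mt = Real.log t := max_eq_right (Real.log_nonneg h1.le)
      rcases le_or_gt t a with h2 | h2
      · have hlog : Real.log t ≤ Real.log a := Real.log_le_log ht h2
        nlinarith
      · have hMa' : Ma = Real.log t - Real.log a := by
          rw [hMa, Real.log_div (ne_of_gt ht) (ne_of_gt ha0)]
          exact max_eq_right (by
            have := Real.log_le_log ha0 h2.le; linarith)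
        have hlog : Real.log a ≤ Real.log t := Real.log_le_log ha0 h2.le
        nlinarith
  -- positivity of phi
  have hphit : 0 < phi r δ t := by
    rw [phi]
    exact mul_pos (Real.rpow_pos_of_pos ht _) (Real.rpow_pos_of_pos h1Mt _)
  have hphita : 0 < phi r δ (t / a) := by
    rw [phi]
    exact mul_pos (Real.rpow_pos_of_pos hta _) (Real.rpow_pos_of_pos h1Ma _)
  -- compute the ratio
  have hratio : bk r δ a (k + 1) / bk r δ a k
      = a ^ r * ((1 + Mt) / (1 + Ma)) ^ δ := by
    have h1 : bk r δ a (k + 1) = 1 / phi r δ (t / a) := by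
      rw [bk, neg_add, ← hexp]; ring_nf
    have h2 : bk r δ a k = 1 / phi r δ t := by rw [bk]
    rw [h1, h2]
    rw [show (1 / phi r δ (t / a) / (1 / phi r δ t)) = phi r δ t / phi r δ (t / a) by
      field_simp]
    rw [phi, phi, Real.div_rpow h1Mt.le h1Ma.le]
    have htar : (t / a) ^ r = t ^ r / a ^ r := Real.div_rpow ht.le ha0.le r
    rw [htar]
    field_simp
    ring
  have hX1 : (1:ℝ) ≤ (1 + Mt) / (1 + Ma) := (one_le_div h1Ma).mpr (by linarith)
  have hXδ1 : (1:ℝ) ≤ ((1 + Mt) / (1 + Ma)) ^ δ := Real.one_le_rpow hX1 hδ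
  have har : 0 < a ^ r := Real.rpow_pos_of_pos ha0 _
  constructor
  · rw [hratio]
    nlinarith
  · rw [hratio, phi]
    have hmaxa : max 0 (Real.log a) = Real.log a := max_eq_right hla.le
    rw [hmaxa]
    have hXle : (1 + Mt) / (1 + Ma) ≤ 1 + Real.log a := by
      rw [div_le_iff₀ h1Ma]; nlinarith
    have := Real.rpow_le_rpow (by positivity) hXle hδ
    nlinarith [Real.rpow_pos_of_pos (show (0:ℝ) < 1 + Real.log a by linarith) δ]

end
end

section
/- Let r ≥ 1, δ ≥ 0, Φ(t) = t^r (1 + log⁺ t)^δ, a > 1, and b_k = 1/Φ(a^{-k}) for k ∈ ℤ. Let v be an A₁ weight, k, ℓ ∈ ℤ with ℓ ≥ k, and define v_k(x) = min{v(x)^r, b_{k+1}}. If Q is a cube satisfying a^ℓ/[v]_{A₁} ≤ ess inf_Q v, then b_k/[v]_{A₁}^r ≤ (1/|Q|) ∫_Q v_k(x) dx ≤ b_{k+1}. -/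
/-!
A.e. on `Q` we have `v ≥ ess inf_Q v ≥ a^ℓ/[v]_{A₁} ≥ a^k/[v]_{A₁}`, and `b_k ≤ a^{kr}` because
`Φ(t) ≥ t^r`; hence `v^r ≥ b_k/[v]_{A₁}^r`. Since `[v]_{A₁} ≥ 1` (the essential infimum never
exceeds the average) and `k ↦ b_k` is increasing, also `b_{k+1} ≥ b_k/[v]_{A₁}^r`. So
`b_k/[v]_{A₁}^r ≤ v_k ≤ b_{k+1}` a.e. on `Q`, and averaging over `Q` gives both bounds.
-/

open MeasureTheory Filter ENNReal

noncomputable section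

section Average

variable {α : Type*} [MeasurableSpace α] {μ : Measure α} {s : Set α} {f : α → ℝ} {m : ℝ}

theorem ae_essInf_le_of_ae_nonneg (hf : ∀ᵐ x ∂μ, 0 ≤ f x) : ∀ᵐ x ∂μ, essInf f μ ≤ f x :=
  ae_essInf_le (isBoundedUnder_of_eventually_ge hf)

theorem le_setAverage_of_ae_le (hs₀ : μ s ≠ 0) (hs : μ s ≠ ∞) (hf : IntegrableOn f s μ)
    (hmf : ∀ᵐ x ∂μ.restrict s, m ≤ f x) : m ≤ ⨍ x in s, f x ∂μ := by
  calc m = ⨍ _ in s, m ∂μ := (setAverage_const hs₀ hs m).symm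
    _ ≤ ⨍ x in s, f x ∂μ := by
      simp only [setAverage_eq, smul_eq_mul]
      exact mul_le_mul_of_nonneg_left (integral_mono_ae (integrableOn_const (C := m) hs) hf hmf)
        (by positivity)

theorem setAverage_le_of_ae_le (hs₀ : μ s ≠ 0) (hs : μ s ≠ ∞) (hf : IntegrableOn f s μ)
    (hfm : ∀ᵐ x ∂μ.restrict s, f x ≤ m) : ⨍ x in s, f x ∂μ ≤ m := by
  calc ⨍ x in s, f x ∂μ ≤ ⨍ _ in s, m ∂μ := by
        simp only [setAverage_eq, smul_eq_mul]
        exact mul_le_mul_of_nonneg_left (integral_mono_ae hf (integrableOn_const (C := m) hs) hfm)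
          (by positivity)
    _ = m := setAverage_const hs₀ hs m

theorem integrableOn_of_ae_nonneg_of_ae_le (hs : μ s ≠ ∞)
    (hf : AEStronglyMeasurable f (μ.restrict s)) (hf₀ : ∀ᵐ x ∂μ.restrict s, 0 ≤ f x)
    (hfm : ∀ᵐ x ∂μ.restrict s, f x ≤ m) : IntegrableOn f s μ :=
  Integrable.mono' (integrableOn_const (C := m) hs) hf <| by
    filter_upwards [hf₀, hfm] with x hx₀ hxm
    rwa [Real.norm_of_nonneg hx₀]

theorem setAverage_pos_of_ae_pos (hs₀ : μ s ≠ 0) (hs : μ s ≠ ∞) (hf : IntegrableOn f s μ)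
    (hpos : ∀ᵐ x ∂μ.restrict s, 0 < f x) : 0 < ⨍ x in s, f x ∂μ := by
  have hsupport : μ.restrict s (Function.support f) = μ s :=
    (measure_congr (eventuallyEq_univ.2 (hpos.mono fun _ hx => hx.ne'))).trans
      (Measure.restrict_apply_univ s)
  rw [setAverage_eq, smul_eq_mul]
  refine mul_pos (inv_pos.2 (ENNReal.toReal_pos hs₀ hs)) ?_
  rw [integral_pos_iff_support_of_nonneg_ae (hpos.mono fun _ hx => hx.le) hf, hsupport]
  exact pos_iff_ne_zero.2 hs₀

end Average

section Cube

variable {n : ℕ}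

theorem avg_eq_setAverage (Q : Set (Fin n → ℝ)) (g : (Fin n → ℝ) → ℝ) :
    avg Q g = ⨍ x in Q, g x := by
  rw [avg, setAverage_eq, smul_eq_mul, measureReal_def]

theorem volume_cube (c : Fin n → ℝ) (h : ℝ) : volume (cube c h) = ENNReal.ofReal h ^ n := by
  simp [cube, Real.volume_pi_Ico]

theorem volume_cube_ne_zero (c : Fin n → ℝ) {h : ℝ} (hh : 0 < h) : volume (cube c h) ≠ 0 := by
  simp [volume_cube, hh]

theorem volume_cube_ne_top (c : Fin n → ℝ) (h : ℝ) : volume (cube c h) ≠ ∞ := by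
  simp [volume_cube]

theorem MeasureTheory.LocallyIntegrable.integrableOn_cube {μ : Measure (Fin n → ℝ)}
    {v : (Fin n → ℝ) → ℝ} (hv : LocallyIntegrable v μ) (c : Fin n → ℝ) (h : ℝ) :
    IntegrableOn v (cube c h) μ := by
  refine (hv.integrableOn_isCompact (isCompact_Icc (a := c) (b := fun i => c i + h))).mono_set ?_
  rw [cube, ← Set.pi_univ_Icc]
  exact Set.pi_mono fun _ _ => Set.Ico_subset_Icc_self

theorem one_le_A1const {v : (Fin n → ℝ) → ℝ} (hv : IsA1 v) : 1 ≤ A1const v := by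
  obtain ⟨hloc, hpos, C₀, hC₀, hC₀Q⟩ := hv
  refine le_csInf ⟨C₀, hC₀, hC₀Q⟩ ?_
  rintro C ⟨hC, hCQ⟩
  have hQ₀ := volume_cube_ne_zero (0 : Fin n → ℝ) one_pos
  have hQ := volume_cube_ne_top (0 : Fin n → ℝ) 1
  have hint := hloc.integrableOn_cube 0 1
  have hinf_le_avg : essInf v (volume.restrict (cube 0 1)) ≤ avg (cube 0 1) v := by
    rw [avg_eq_setAverage]
    exact le_setAverage_of_ae_le hQ₀ hQ hint
      (ae_essInf_le_of_ae_nonneg ((ae_restrict_of_ae hpos).mono fun _ hx => hx.le))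
  have havg_pos : 0 < avg (cube (0 : Fin n → ℝ) 1) v := by
    rw [avg_eq_setAverage]
    exact setAverage_pos_of_ae_pos hQ₀ hQ hint (ae_restrict_of_ae hpos)
  -- `0 < avg ≤ C · essInf` forces `essInf > 0`, and then `essInf ≤ avg` gives `C ≥ 1`.
  have := hCQ 0 1 one_pos
  nlinarith

end Cube

section Phi

variable {r δ a : ℝ}

theorem phi_pos {t : ℝ} (ht : 0 < t) : 0 < phi r δ t := by
  unfold phi
  have : 0 ≤ max 0 (Real.log t) := le_max_left _ _
  positivity

theorem rpow_le_phi (hδ : 0 ≤ δ) {t : ℝ} (ht : 0 ≤ t) : t ^ r ≤ phi r δ t :=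
  le_mul_of_one_le_right (Real.rpow_nonneg ht r)
    (Real.one_le_rpow (le_add_of_nonneg_right (le_max_left _ _)) hδ)

theorem phi_monotoneOn (hr : 0 ≤ r) (hδ : 0 ≤ δ) : MonotoneOn (phi r δ) (Set.Ioi 0) := by
  intro s (hs : 0 < s) t _ hst
  have ht : 0 < t := hs.trans_le hst
  have hlog : max 0 (Real.log s) ≤ max 0 (Real.log t) :=
    max_le_max le_rfl (Real.log_le_log hs hst)
  have : 0 ≤ max 0 (Real.log s) := le_max_left _ _
  unfold phi
  gcongr

theorem bk_pos (ha : 0 < a) (k : ℤ) : 0 < bk r δ a k :=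
  one_div_pos.2 (phi_pos (zpow_pos ha _))

theorem bk_monotone (hr : 0 ≤ r) (hδ : 0 ≤ δ) (ha : 1 ≤ a) : Monotone (bk r δ a) := by
  intro k m hkm
  have ha₀ : 0 < a := zero_lt_one.trans_le ha
  exact one_div_le_one_div_of_le (phi_pos (zpow_pos ha₀ _))
    (phi_monotoneOn hr hδ (zpow_pos ha₀ _) (zpow_pos ha₀ _)
      (zpow_le_zpow_right₀ ha (neg_le_neg hkm)))

theorem bk_le_zpow_rpow (hδ : 0 ≤ δ) (ha : 0 < a) (k : ℤ) : bk r δ a k ≤ (a ^ k) ^ r := by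
  have hpow : 0 < (a ^ (-k)) ^ r := Real.rpow_pos_of_pos (zpow_pos ha _) r
  calc bk r δ a k ≤ 1 / (a ^ (-k)) ^ r :=
        one_div_le_one_div_of_le hpow (rpow_le_phi hδ (zpow_pos ha _).le)
    _ = (a ^ k) ^ r := by rw [zpow_neg, Real.inv_rpow (zpow_pos ha k).le, one_div, inv_inv]

theorem bk_div_rpow_le_min (hr : 0 ≤ r) (hδ : 0 ≤ δ) (ha : 1 ≤ a) {A t : ℝ} (hA : 1 ≤ A)
    (k : ℤ) (ht : a ^ k / A ≤ t) : bk r δ a k / A ^ r ≤ min (t ^ r) (bk r δ a (k + 1)) := by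
  have ha₀ : 0 < a := zero_lt_one.trans_le ha
  have hA₀ : 0 < A := zero_lt_one.trans_le hA
  refine le_min ?_ ?_
  · calc bk r δ a k / A ^ r ≤ (a ^ k) ^ r / A ^ r := by gcongr; exact bk_le_zpow_rpow hδ ha₀ k
      _ = (a ^ k / A) ^ r := (Real.div_rpow (zpow_pos ha₀ k).le hA₀.le r).symm
      _ ≤ t ^ r := Real.rpow_le_rpow (by positivity) ht hr
  · calc bk r δ a k / A ^ r ≤ bk r δ a k :=
        div_le_self (bk_pos ha₀ k).le (Real.one_le_rpow hA hr)
      _ ≤ bk r δ a (k + 1) := bk_monotone hr hδ ha (Int.le_add_one le_rfl)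

end Phi

/-- Lemma 5 of the paper. Bounds for the averages of
`v_k = min{v^r, b_{k+1}}` over the decomposition cubes. -/
theorem vk_average_bounds {n : ℕ} (r δ : ℝ) (hr : 1 ≤ r) (hδ : 0 ≤ δ)
    (a : ℝ) (ha : 1 < a) (v : (Fin n → ℝ) → ℝ) (hv : IsA1 v)
    (k l : ℤ) (hkl : k ≤ l) (c : Fin n → ℝ) (h : ℝ) (hh : 0 < h)
    (hQ : a ^ l / A1const v ≤ essInf v (volume.restrict (cube c h))) :
    bk r δ a k / A1const v ^ r ≤
        avg (cube c h) (fun x => min (v x ^ r) (bk r δ a (k + 1))) ∧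
      avg (cube c h) (fun x => min (v x ^ r) (bk r δ a (k + 1))) ≤ bk r δ a (k + 1) := by
  have hA := one_le_A1const hv
  obtain ⟨hloc, hpos, -⟩ := hv
  have hlower : ∀ᵐ x ∂volume.restrict (cube c h),
      bk r δ a k / A1const v ^ r ≤ min (v x ^ r) (bk r δ a (k + 1)) := by
    filter_upwards [ae_essInf_le_of_ae_nonneg ((ae_restrict_of_ae hpos).mono fun _ hx => hx.le)]
      with x hx
    refine bk_div_rpow_le_min (by linarith) hδ ha.le hA k (le_trans ?_ (hQ.trans hx))
    gcongr
    exact ha.le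
  have hupper : ∀ᵐ x ∂volume.restrict (cube c h),
      min (v x ^ r) (bk r δ a (k + 1)) ≤ bk r δ a (k + 1) :=
    ae_of_all _ fun _ => min_le_right _ _
  have hnonneg : ∀ᵐ x ∂volume.restrict (cube c h), 0 ≤ min (v x ^ r) (bk r δ a (k + 1)) :=
    (ae_restrict_of_ae hpos).mono fun _ hx =>
      le_min (Real.rpow_nonneg hx.le r) (bk_pos (zero_lt_one.trans ha) _).le
  have hint : IntegrableOn (fun x => min (v x ^ r) (bk r δ a (k + 1))) (cube c h) :=
    integrableOn_of_ae_nonneg_of_ae_le (volume_cube_ne_top c h)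
      ((hloc.aestronglyMeasurable.restrict.aemeasurable.pow_const r).min
        aemeasurable_const).aestronglyMeasurable hnonneg hupper
  rw [avg_eq_setAverage]
  exact ⟨le_setAverage_of_ae_le (volume_cube_ne_zero c hh) (volume_cube_ne_top c h) hint hlower,
    setAverage_le_of_ae_le (volume_cube_ne_zero c hh) (volume_cube_ne_top c h) hint hupper⟩

end
end
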